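/- Let U and W be two K-vector subspaces of Kⁿ of the same dimension d with res(U) = res(W). Then there exists a matrix M ∈ GLₙ(𝒪) with res(M) = Iₙ (hence a risometry of Kⁿ) such that M(U) = W. -/

import Mathlib

noncomputable section

open scoped Classical Pointwise

section Preamble

variable {K : Type*} [Field K] {Γ : Type*} [LinearOrderedCommGroupWithZero Γ]

instance (priority := 100) : OrderBot Γ where
  bot := 0
  bot_le _ := zero_le'

/-- The max-valuation on `K^n`: `v(a) = maxᵢ v(aᵢ)`. -/
def vv (v : Valuation K Γ) {n : ℕ} (x : Fin n → K) : Γ :=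
  Finset.univ.sup fun i => v (x i)

/-- `rvEq v x y` expresses `rv(x) = rv(y)` in `RV⁽ⁿ⁾ = Kⁿ/∼`, where
`x ∼ y` iff `v(x−y) < v(x)` or `x = y = 0`. -/
def rvEq (v : Valuation K Γ) {n : ℕ} (x y : Fin n → K) : Prop :=
  vv v (x - y) < vv v x ∨ (x = 0 ∧ y = 0)

/-- Balls in `K` (with `K` itself counting as a ball). -/
def IsBall1 (v : Valuation K Γ) (B : Set K) : Prop :=
  B = Set.univ ∨ ∃ a : K, ∃ γ : Γ, γ ≠ 0 ∧
    (B = {x | v (x - a) < γ} ∨ B = {x | v (x - a) ≤ γ})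

/-- Balls in `Kⁿ` (with `Kⁿ` itself counting as a ball). -/
def IsBall (v : Valuation K Γ) {n : ℕ} (B : Set (Fin n → K)) : Prop :=
  B = Set.univ ∨ ∃ a : Fin n → K, ∃ γ : Γ, γ ≠ 0 ∧
    (B = {x | vv v (x - a) < γ} ∨ B = {x | vv v (x - a) ≤ γ})

/-- Spherical completeness: every nonempty chain of balls in `K` has nonempty
intersection. -/
def SphericallyComplete (v : Valuation K Γ) : Prop :=
  ∀ C : Set (Set K), C.Nonempty → (∀ B ∈ C, IsBall1 v B) → IsChain (· ⊆ ·) C →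
    (⋂ B ∈ C, B).Nonempty

/-- The residue field `K̄` of the valuation ring `𝒪 = {x | v x ≤ 1}`. -/
def Kbar (v : Valuation K Γ) : Type _ :=
  IsLocalRing.ResidueField v.valuationSubring

instance (v : Valuation K Γ) : Field (Kbar v) :=
  inferInstanceAs (Field (IsLocalRing.ResidueField v.valuationSubring))

/-- The residue map `res : 𝒪 → K̄`, extended by the junk value `0` outside `𝒪`. -/
def res' (v : Valuation K Γ) (x : K) : Kbar v :=
  if h : v x ≤ 1 then IsLocalRing.residue v.valuationSubring ⟨x, h⟩ else 0

/-- The coordinatewise residue map on `Kⁿ`. -/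
def resv (v : Valuation K Γ) {n : ℕ} (x : Fin n → K) : Fin n → Kbar v :=
  fun i => res' v (x i)

/-- `res(S)` for a set `S ⊆ Kⁿ`: the set of residues of points of `S ∩ 𝒪ⁿ`. -/
def resSet (v : Valuation K Γ) {n : ℕ} (S : Set (Fin n → K)) : Set (Fin n → Kbar v) :=
  resv v '' {x ∈ S | ∀ i, v (x i) ≤ 1}

/-- `dir(x) = res(K·x) ⊆ K̄ⁿ`. -/
def dirSet (v : Valuation K Γ) {n : ℕ} (x : Fin n → K) : Set (Fin n → Kbar v) :=
  resSet v {y | ∃ c : K, y = c • x}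

/-- The coordinate projection `Kⁿ → K^d` selecting the coordinates `σ 0 < σ 1 < ⋯`. -/
def proj {A : Type*} {n d : ℕ} (σ : Fin d → Fin n) (x : Fin n → A) : Fin d → A :=
  fun k => x (σ k)

/-- `σ` (a strictly increasing selection of `d` of the `n` coordinates) is an
exhibition of the `K̄`-subspace `Ū ⊆ K̄ⁿ` if the corresponding coordinate projection
`K̄ⁿ → K̄^d` restricts to an isomorphism from `Ū` onto `K̄^d`. -/
def IsExhibition (v : Valuation K Γ) {n d : ℕ} (σ : Fin d → Fin n)
    (Ubar : Submodule (Kbar v) (Fin n → Kbar v)) : Prop :=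
  StrictMono σ ∧ Set.BijOn (proj σ) (Ubar : Set (Fin n → Kbar v)) Set.univ

/-- `affdir(C)`: the `K̄`-subspace of `K̄ⁿ` generated by all `dir(x − x')`, `x, x' ∈ C`. -/
def affdir (v : Valuation K Γ) {n : ℕ} (C : Set (Fin n → K)) :
    Submodule (Kbar v) (Fin n → Kbar v) :=
  Submodule.span (Kbar v) (⋃ x ∈ C, ⋃ x' ∈ C, dirSet v (x - x'))

/-- A matrix has entries in the valuation ring `𝒪`. -/
def EntriesInO (v : Valuation K Γ) {n : ℕ} (M : Matrix (Fin n) (Fin n) K) : Prop :=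
  ∀ i j, v (M i j) ≤ 1

/-- `M ∈ GLₙ(𝒪)`: `M` is invertible, with entries in `𝒪`, and its inverse also has
entries in `𝒪`. -/
def MemGLO (v : Valuation K Γ) {n : ℕ} (M : Matrix (Fin n) (Fin n) K) : Prop :=
  EntriesInO v M ∧ ∃ N : Matrix (Fin n) (Fin n) K,
    M * N = 1 ∧ N * M = 1 ∧ EntriesInO v N

/-- The entrywise residue matrix of `M`. -/
def resM (v : Valuation K Γ) {n : ℕ} (M : Matrix (Fin n) (Fin n) K) :
    Matrix (Fin n) (Fin n) (Kbar v) :=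
  fun i j => res' v (M i j)

/-- `DeltaLE v U W γ` expresses `Δ(U, W) ≤ γ`: for every `u ∈ U` there is `w ∈ W`
with `v(u − w) ≤ v(u)·γ`. -/
def DeltaLE (v : Valuation K Γ) {n : ℕ} (U W : Submodule K (Fin n → K)) (γ : Γ) : Prop :=
  ∀ u ∈ U, ∃ w ∈ W, vv v (u - w) ≤ vv v u * γ

/-- `IsDelta v U W γ` expresses `Δ(U, W) = γ`: `γ` is the minimum of all admissible
bounds. -/
def IsDelta (v : Valuation K Γ) {n : ℕ} (U W : Submodule K (Fin n → K)) (γ : Γ) : Prop :=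
  DeltaLE v U W γ ∧ ∀ δ : Γ, DeltaLE v U W δ → γ ≤ δ

end Preamble

/-!
Let `Ū = res U = res W`, of dimension at most `d`. Choose a set `S` of `d` coordinates on which
`Ū` projects injectively. Then on `U`, and likewise on `W`, the max-valuation is attained on `S`,
so the projection `π_S` to `K^S` is an isomorphism whose inverse `L_U` (resp. `L_W`) maps `𝒪^S`
into `𝒪ⁿ`, and `L_U y ≡ L_W y (mod 𝔪)` for `y ∈ 𝒪^S` because both residues lie in `Ū` and agree
on `S`. Hence `M = 1 + (L_W - L_U) ∘ π_S` is the identity plus a matrix with entries in `𝔪`,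
so `M ∈ GLₙ(𝒪)`, `res M = 1` and `M` is a risometry; and `M ∘ L_U = L_W` gives `M(U) = W`.
-/

open IsLocalRing

section Residue

variable {K : Type*} [Field K] {Γ : Type*} [LinearOrderedCommGroupWithZero Γ] (v : Valuation K Γ)

/-- `residue`, typed with codomain the synonym `Kbar v` so that the ring-hom lemmas produce the
field operations of `Kbar v`. -/
def residueHom : v.valuationSubring →+* Kbar v := residue v.valuationSubring

lemma res'_coe (x : v.valuationSubring) : res' v x = residueHom v x :=
  dif_pos x.2

lemma res'_zero : res' v 0 = 0 := by
  simpa using res'_coe v 0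

lemma res'_one : res' v 1 = 1 := by
  simpa using res'_coe v 1

lemma res'_add {x y : K} (hx : v x ≤ 1) (hy : v y ≤ 1) :
    res' v (x + y) = res' v x + res' v y :=
  (res'_coe v (⟨x, hx⟩ + ⟨y, hy⟩)).trans <| by rw [map_add, ← res'_coe, ← res'_coe]

lemma res'_sub {x y : K} (hx : v x ≤ 1) (hy : v y ≤ 1) :
    res' v (x - y) = res' v x - res' v y :=
  (res'_coe v (⟨x, hx⟩ - ⟨y, hy⟩)).trans <| by rw [map_sub, ← res'_coe, ← res'_coe]

lemma res'_mul {x y : K} (hx : v x ≤ 1) (hy : v y ≤ 1) :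
    res' v (x * y) = res' v x * res' v y :=
  (res'_coe v (⟨x, hx⟩ * ⟨y, hy⟩)).trans <| by rw [map_mul, ← res'_coe, ← res'_coe]

lemma res'_sum {ι : Type*} (s : Finset ι) {f : ι → K} (hf : ∀ j, v (f j) ≤ 1) :
    res' v (∑ j ∈ s, f j) = ∑ j ∈ s, res' v (f j) := by
  simpa [← res'_coe] using res'_coe v (∑ j ∈ s, ⟨f j, hf j⟩)

lemma residueHom_eq_zero_iff {x : v.valuationSubring} : residueHom v x = 0 ↔ v x < 1 :=
  residue_eq_zero_iff x |>.trans (Valuation.mem_maximalIdeal_iff K v)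

lemma res'_eq_zero_iff {x : K} (hx : v x ≤ 1) : res' v x = 0 ↔ v x < 1 :=
  res'_coe v ⟨x, hx⟩ ▸ residueHom_eq_zero_iff v

lemma exists_res'_eq (y : Kbar v) : ∃ x, v x ≤ 1 ∧ res' v x = y := by
  obtain ⟨x, rfl⟩ := residue_surjective y
  exact ⟨x, x.2, res'_coe v x⟩

end Residue

section SupValuation

variable {K : Type*} [Field K] {Γ : Type*} [LinearOrderedCommGroupWithZero Γ] (v : Valuation K Γ)
  {n : ℕ}

lemma le_vv (x : Fin n → K) (i : Fin n) : v (x i) ≤ vv v x :=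
  Finset.le_sup (f := fun i => v (x i)) (Finset.mem_univ i)

lemma vv_le_iff {x : Fin n → K} {γ : Γ} : vv v x ≤ γ ↔ ∀ i, v (x i) ≤ γ := by
  simp [vv]

lemma vv_lt {x : Fin n → K} {γ : Γ} (hγ : 0 < γ) (h : ∀ i, v (x i) < γ) : vv v x < γ :=
  (Finset.sup_lt_iff (bot_eq_zero (α := Γ) ▸ hγ)).2 fun i _ => h i

lemma vv_eq_zero_iff {x : Fin n → K} : vv v x = 0 ↔ x = 0 := by
  rw [← le_zero_iff, vv_le_iff, funext_iff]
  simp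

lemma exists_eq_vv {x : Fin n → K} (hx : x ≠ 0) : ∃ i, v (x i) = vv v x := by
  obtain ⟨i, -, hi⟩ := Finset.exists_mem_eq_sup Finset.univ
    (Finset.univ_nonempty_iff.2 ⟨(Function.ne_iff.1 hx).choose⟩) fun i => v (x i)
  exact ⟨i, hi.symm⟩

lemma vv_sub_le (x y : Fin n → K) : vv v (x - y) ≤ max (vv v x) (vv v y) :=
  (vv_le_iff v).2 fun i => (v.map_sub _ _).trans (max_le_max (le_vv v x i) (le_vv v y i))

lemma vv_add_eq_of_lt {x y : Fin n → K} (h : vv v y < vv v x) : vv v (x + y) = vv v x := by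
  refine le_antisymm ((vv_le_iff v).2 fun i => ?_) ?_
  · exact (v.map_add _ _).trans (max_le (le_vv v x i) ((le_vv v y i).trans h.le))
  · have := vv_sub_le v (x + y) y
    rw [add_sub_cancel_right] at this
    exact (le_max_iff.1 this).resolve_right h.not_ge

end SupValuation

section ResidueSubspace

variable {K : Type*} [Field K] {Γ : Type*} [LinearOrderedCommGroupWithZero Γ] (v : Valuation K Γ)
  {n : ℕ}

lemma resv_sum {ι : Type*} (s : Finset ι) {a : ι → K} {x : ι → Fin n → K}
    (ha : ∀ j, v (a j) ≤ 1) (hx : ∀ j i, v (x j i) ≤ 1) :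
    resv v (∑ j ∈ s, a j • x j) = ∑ j ∈ s, res' v (a j) • resv v (x j) := by
  ext i
  simp only [resv, Finset.sum_apply, Pi.smul_apply, smul_eq_mul]
  rw [res'_sum v s fun j => by rw [map_mul]; exact mul_le_one' (ha j) (hx j i)]
  exact Finset.sum_congr rfl fun j _ => res'_mul v (ha j) (hx j i)

def resSubmodule (U : Submodule K (Fin n → K)) : Submodule (Kbar v) (Fin n → Kbar v) where
  carrier := resSet v (U : Set (Fin n → K))
  zero_mem' := ⟨0, ⟨U.zero_mem, by simp⟩, funext fun _ => res'_zero v⟩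
  add_mem' := by
    rintro _ _ ⟨x, ⟨hxU, hx⟩, rfl⟩ ⟨y, ⟨hyU, hy⟩, rfl⟩
    exact ⟨x + y, ⟨U.add_mem hxU hyU, fun i => (v.map_add _ _).trans (max_le (hx i) (hy i))⟩,
      funext fun i => res'_add v (hx i) (hy i)⟩
  smul_mem' := by
    rintro c _ ⟨x, ⟨hxU, hx⟩, rfl⟩
    obtain ⟨c, hc, rfl⟩ := exists_res'_eq v c
    refine ⟨c • x, ⟨U.smul_mem c hxU, fun i => ?_⟩, funext fun i => res'_mul v hc (hx i)⟩
    simpa using mul_le_one' hc (hx i)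

lemma mem_resSubmodule {U : Submodule K (Fin n → K)} {a : Fin n → Kbar v} :
    a ∈ resSubmodule v U ↔ ∃ x ∈ U, (∀ i, v (x i) ≤ 1) ∧ resv v x = a := by
  simp [resSubmodule, resSet, and_assoc]

/-- Clearing denominators in a `K`-linear relation among vectors of `𝒪ⁿ` leaves a nontrivial
relation among their residues. -/
lemma linearIndependent_of_linearIndependent_resv {ι : Type*} [Fintype ι] {x : ι → Fin n → K}
    (hx : ∀ j i, v (x j i) ≤ 1) (hres : LinearIndependent (Kbar v) fun j => resv v (x j)) :
    LinearIndependent K x := by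
  rw [Fintype.linearIndependent_iff]
  intro g hg
  by_contra! hne
  obtain ⟨j, hj⟩ := hne
  have : Nonempty ι := ⟨j⟩
  obtain ⟨j₀, hj₀⟩ := Finite.exists_max fun j => v (g j)
  have hgj₀ : g j₀ ≠ 0 := fun h => hj (by simpa [h] using hj₀ j)
  have ha : ∀ j, v (g j / g j₀) ≤ 1 := fun j => by
    rw [map_div₀]
    exact div_le_one_of_le₀ (hj₀ j) zero_le
  have hrel : ∑ j, (g j / g j₀) • x j = 0 := by
    simp_rw [div_eq_inv_mul, ← smul_smul, ← Finset.smul_sum, hg, smul_zero]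
  have := Fintype.linearIndependent_iff.1 hres _
    (by rw [← resv_sum v _ ha hx, hrel]; exact funext fun _ => res'_zero v) j₀
  rw [div_self hgj₀, res'_one] at this
  exact one_ne_zero this

lemma finrank_resSubmodule_le (U : Submodule K (Fin n → K)) :
    Module.finrank (Kbar v) (resSubmodule v U) ≤ Module.finrank K U := by
  let b := Module.finBasis (Kbar v) (resSubmodule v U)
  choose x hxU hx hres using fun j => (mem_resSubmodule v).1 (b j).2
  have hb : LinearIndependent (Kbar v) fun j => (b j : Fin n → Kbar v) :=
    b.linearIndependent.map' (resSubmodule v U).subtype (Submodule.ker_subtype _)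
  simp only [← hres] at hb
  have hind := linearIndependent_of_linearIndependent_resv v hx hb
  simpa using (LinearIndependent.of_comp (v := fun j => (⟨x j, hxU j⟩ : U)) U.subtype hind
    |>.fintype_card_le_finrank)

end ResidueSubspace

section Coordinates

variable {F : Type*} [Field F] {n : ℕ}

def CoordsDetermine (S : Finset (Fin n)) (V : Submodule F (Fin n → F)) : Prop :=
  ∀ x ∈ V, (∀ i ∈ S, x i = 0) → x = 0

lemma exists_finset_card_le_of_finrank_le (d : ℕ) {V : Submodule F (Fin n → F)}
    (hV : Module.finrank F V ≤ d) :
    ∃ S : Finset (Fin n), S.card ≤ d ∧ CoordsDetermine S V := by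
  induction d generalizing V with
  | zero =>
    refine ⟨∅, le_rfl, fun x hx _ => ?_⟩
    rwa [Submodule.finrank_eq_zero.1 (Nat.le_zero.1 hV), Submodule.mem_bot] at hx
  | succ d ih =>
    by_cases hV0 : V = ⊥
    · exact ⟨∅, Nat.zero_le _, fun x hx _ => (Submodule.mem_bot F).1 (hV0 ▸ hx)⟩
    obtain ⟨u, huV, hu⟩ := Submodule.exists_mem_ne_zero_of_ne_bot hV0
    obtain ⟨i₀, hi₀⟩ := Function.ne_iff.1 hu
    let V' := V ⊓ LinearMap.ker (LinearMap.proj i₀ : (Fin n → F) →ₗ[F] F)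
    have hlt : Module.finrank F V' < Module.finrank F V :=
      Submodule.finrank_lt_finrank_of_lt
        (SetLike.lt_iff_le_and_exists.2 ⟨inf_le_left, u, huV, fun h => hi₀ h.2⟩)
    obtain ⟨S, hS, hSV⟩ := ih (V := V') (by omega)
    refine ⟨insert i₀ S, (Finset.card_insert_le _ _).trans (by omega), fun x hx h => ?_⟩
    exact hSV x ⟨hx, h i₀ (Finset.mem_insert_self _ _)⟩
      fun i hi => h i (Finset.mem_insert_of_mem hi)

lemma exists_finset_card_eq_of_finrank_le {d : ℕ} {V : Submodule F (Fin n → F)}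
    (hV : Module.finrank F V ≤ d) (hd : d ≤ n) :
    ∃ S : Finset (Fin n), S.card = d ∧ CoordsDetermine S V := by
  obtain ⟨S, hS, hSV⟩ := exists_finset_card_le_of_finrank_le d hV
  obtain ⟨T, hST, -, hT⟩ := Finset.exists_subsuperset_card_eq S.subset_univ hS (by simpa using hd)
  exact ⟨T, hT, fun x hx h => hSV x hx fun i hi => h i (hST hi)⟩

def coordRestrict (R : Type*) [Semiring R] (S : Finset (Fin n)) : (Fin n → R) →ₗ[R] S → R :=
  LinearMap.funLeft R R (↑)

@[simp]
lemma coordRestrict_apply (R : Type*) [Semiring R] (S : Finset (Fin n)) (x : Fin n → R) (i : S) :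
    coordRestrict R S x i = x i :=
  rfl

lemma apply_of_coordRestrict_comp_eq_id {R : Type*} [Semiring R] {S : Finset (Fin n)}
    {L : (S → R) →ₗ[R] Fin n → R} (hL : coordRestrict R S ∘ₗ L = LinearMap.id) (y : S → R)
    {i : Fin n} (hi : i ∈ S) : L y i = y ⟨i, hi⟩ :=
  congrFun (LinearMap.congr_fun hL y) ⟨i, hi⟩

end Coordinates

section CoordsDetermine

variable {K : Type*} [Field K] {Γ : Type*} [LinearOrderedCommGroupWithZero Γ] (v : Valuation K Γ)
  {n : ℕ} {V : Submodule K (Fin n → K)} {S : Finset (Fin n)}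

/-- Rescale `x` so that its largest coordinate is `1`: its residue is then a nonzero point of
`res V`, hence has a nonzero coordinate in `S`. -/
lemma vv_eq_sup_of_coordsDetermine (hS : CoordsDetermine S (resSubmodule v V))
    {x : Fin n → K} (hx : x ∈ V) : vv v x = S.sup fun i => v (x i) := by
  refine le_antisymm ?_ (Finset.sup_mono S.subset_univ)
  rcases eq_or_ne x 0 with rfl | hx0
  · simp [(vv_eq_zero_iff v).2]
  obtain ⟨i₀, hi₀⟩ := exists_eq_vv v hx0
  have hxi₀ : x i₀ ≠ 0 := fun h => hx0 ((vv_eq_zero_iff v).1 (by rw [← hi₀, h, map_zero]))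
  set y := (x i₀)⁻¹ • x
  have hy : ∀ i, v (y i) ≤ 1 := fun i => by
    simpa [y, hi₀] using inv_mul_le_one_of_le₀ (le_vv v x i) zero_le
  obtain ⟨i, hiS, hi⟩ : ∃ i ∈ S, res' v (y i) ≠ 0 := by
    by_contra! h
    have := congrFun (hS _ ((mem_resSubmodule v).2 ⟨y, V.smul_mem _ hx, hy, rfl⟩) h) i₀
    simp [resv, y, hxi₀, res'_one] at this
  have hyi : v (y i) = 1 := le_antisymm (hy i) (not_lt.1 ((res'_eq_zero_iff v (hy i)).not.1 hi))
  have hxi : vv v x = v (x i) := by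
    simpa [y, hi₀, inv_mul_eq_one₀ ((vv_eq_zero_iff v).not.2 hx0)] using hyi
  rw [hxi]
  exact Finset.le_sup (f := fun i => v (x i)) hiS

lemma eq_zero_of_coordsDetermine (hS : CoordsDetermine S (resSubmodule v V))
    {x : Fin n → K} (hx : x ∈ V) (h0 : ∀ i ∈ S, x i = 0) : x = 0 := by
  rw [← vv_eq_zero_iff v, vv_eq_sup_of_coordsDetermine v hS hx]
  exact le_antisymm (Finset.sup_le fun i hi => by simp [h0 i hi]) zero_le

lemma le_one_of_coordsDetermine (hS : CoordsDetermine S (resSubmodule v V))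
    {x : Fin n → K} (hx : x ∈ V) (h1 : ∀ i ∈ S, v (x i) ≤ 1) (i : Fin n) : v (x i) ≤ 1 :=
  (le_vv v x i).trans ((vv_eq_sup_of_coordsDetermine v hS hx).trans_le (Finset.sup_le h1))

lemma exists_coordRestrict_comp_eq_id (hS : CoordsDetermine S (resSubmodule v V))
    (hcard : S.card = Module.finrank K V) :
    ∃ L : (S → K) →ₗ[K] Fin n → K, LinearMap.range L = V ∧
      coordRestrict K S ∘ₗ L = LinearMap.id := by
  let π := coordRestrict K S ∘ₗ V.subtype
  have hπ : Function.Injective π := by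
    rw [← LinearMap.ker_eq_bot, LinearMap.ker_eq_bot']
    exact fun x hx => Subtype.ext <| eq_zero_of_coordsDetermine v hS x.2 fun i hi => congrFun hx ⟨i, hi⟩
  let e := π.linearEquivOfInjective hπ (by simp [hcard])
  refine ⟨V.subtype ∘ₗ e.symm.toLinearMap, ?_, LinearMap.ext e.apply_symm_apply⟩
  rw [LinearMap.range_comp, LinearEquiv.range, Submodule.map_top, Submodule.range_subtype]

lemma valuation_sub_lt_one_of_coordsDetermine {U W : Submodule K (Fin n → K)}
    (hUW : resSubmodule v U = resSubmodule v W)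
    (hS : CoordsDetermine S (resSubmodule v U)) {x w : Fin n → K}
    (hx : x ∈ U) (hw : w ∈ W) (hxS : ∀ i ∈ S, v (x i) ≤ 1) (hxw : ∀ i ∈ S, w i = x i)
    (i : Fin n) : v ((w - x) i) < 1 := by
  have hx1 := le_one_of_coordsDetermine v hS hx hxS
  have hw1 := le_one_of_coordsDetermine v (hUW ▸ hS) hw fun i hi => hxw i hi ▸ hxS i hi
  have hres : resv v w - resv v x = 0 := by
    refine hS _ (sub_mem (hUW ▸ (mem_resSubmodule v).2 ⟨w, hw, hw1, rfl⟩)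
      ((mem_resSubmodule v).2 ⟨x, hx, hx1, rfl⟩)) fun j hj => ?_
    simp [resv, hxw j hj]
  rw [Pi.sub_apply, ← res'_eq_zero_iff v ((v.map_sub _ _).trans (max_le (hw1 i) (hx1 i))),
    res'_sub v (hw1 i) (hx1 i)]
  exact congrFun hres i

lemma valuation_toMatrix'_lt_one {LU LW : (S → K) →ₗ[K] Fin n → K}
    (hUW : resSubmodule v (LinearMap.range LU) = resSubmodule v (LinearMap.range LW))
    (hS : CoordsDetermine S (resSubmodule v (LinearMap.range LU)))
    (hπU : coordRestrict K S ∘ₗ LU = LinearMap.id) (hπW : coordRestrict K S ∘ₗ LW = LinearMap.id)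
    (i j : Fin n) : v (LinearMap.toMatrix' ((LW - LU) ∘ₗ coordRestrict K S) i j) < 1 := by
  set y := coordRestrict K S (Pi.single j 1)
  have hy : ∀ s, v (y s) ≤ 1 := fun s => by
    by_cases h : (s : Fin n) = j <;> simp [y, h]
  rw [LinearMap.toMatrix'_apply]
  refine valuation_sub_lt_one_of_coordsDetermine v hUW hS (LinearMap.mem_range_self _ y)
    (LinearMap.mem_range_self _ y) (fun i hi => ?_) (fun i hi => ?_) i
  · rw [apply_of_coordRestrict_comp_eq_id hπU y hi]
    exact hy _
  · rw [apply_of_coordRestrict_comp_eq_id hπW y hi, apply_of_coordRestrict_comp_eq_id hπU y hi]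

end CoordsDetermine

section Perturbation

variable {K : Type*} [Field K] {Γ : Type*} [LinearOrderedCommGroupWithZero Γ] (v : Valuation K Γ)
  {n : ℕ}

lemma memGLO_map_subtype {A : Matrix (Fin n) (Fin n) v.valuationSubring} (hA : IsUnit A.det) :
    MemGLO v (A.map v.valuationSubring.subtype) := by
  refine ⟨fun i j => (A i j).2, A⁻¹.map v.valuationSubring.subtype, ?_, ?_, fun i j => (A⁻¹ i j).2⟩
  · rw [← Matrix.map_mul, Matrix.mul_nonsing_inv _ hA, Matrix.map_one _ (map_zero _) (map_one _)]
  · rw [← Matrix.map_mul, Matrix.nonsing_inv_mul _ hA, Matrix.map_one _ (map_zero _) (map_one _)]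

variable {N : Matrix (Fin n) (Fin n) K}

lemma memGLO_one_add (hN : ∀ i j, v (N i j) < 1) : MemGLO v (1 + N) := by
  let A : Matrix (Fin n) (Fin n) v.valuationSubring :=
    1 + Matrix.of fun i j => ⟨N i j, (hN i j).le⟩
  have hA : A.map v.valuationSubring.subtype = 1 + N := by
    ext i j
    by_cases h : i = j <;> simp [A, h]
  have hdet : residueHom v A.det = 1 := by
    rw [RingHom.map_det, RingHom.mapMatrix_apply, ← Matrix.det_one (n := Fin n)]
    congr 1
    ext i j
    have hNij : residueHom v ⟨N i j, (hN i j).le⟩ = 0 := (residueHom_eq_zero_iff v).2 (hN i j)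
    by_cases h : i = j
    · subst h
      simp [A, hNij]
    · simp [A, h, hNij]
  rw [← hA]
  exact memGLO_map_subtype v ((residue_ne_zero_iff_isUnit A.det).1
    (show residueHom v A.det ≠ 0 by rw [hdet]; exact one_ne_zero))

lemma resM_one_add (hN : ∀ i j, v (N i j) < 1) : resM v (1 + N) = 1 := by
  ext i j
  have hNij : res' v (N i j) = 0 := (res'_eq_zero_iff v (hN i j).le).2 (hN i j)
  by_cases h : i = j
  · subst h
    simp [resM, res'_add v (map_one v).le (hN i i).le, hNij, res'_one]
  · simp [resM, h, hNij]

lemma vv_mulVec_lt (hN : ∀ i j, v (N i j) < 1) {x : Fin n → K} (hx : x ≠ 0) :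
    vv v (N.mulVec x) < vv v x := by
  have hpos : 0 < vv v x := zero_lt_iff.2 ((vv_eq_zero_iff v).not.2 hx)
  refine vv_lt v hpos fun i => ?_
  show v (∑ j, N i j * x j) < vv v x
  refine v.map_sum_lt hpos.ne' fun j _ => ?_
  rw [map_mul]
  exact (mul_le_mul_right (le_vv v x j) _).trans_lt (mul_lt_of_lt_one_left hpos (hN i j))

lemma rvEq_one_add_mulVec (hN : ∀ i j, v (N i j) < 1) (x : Fin n → K) :
    rvEq v ((1 + N).mulVec x) x := by
  rcases eq_or_ne x 0 with rfl | hx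
  · exact Or.inr ⟨Matrix.mulVec_zero _, rfl⟩
  have hNx := vv_mulVec_lt v hN hx
  left
  rwa [Matrix.add_mulVec, Matrix.one_mulVec, add_sub_cancel_left, vv_add_eq_of_lt v hNx]

end Perturbation

lemma map_range_mulVecLin_one_add_toMatrix' {R M : Type*} [CommRing R] [AddCommGroup M]
    [Module R M] {n : Type*} [Fintype n] [DecidableEq n] {L L' : M →ₗ[R] n → R}
    {π : (n → R) →ₗ[R] M} (h : π ∘ₗ L = LinearMap.id) :
    (LinearMap.range L).map (1 + LinearMap.toMatrix' ((L' - L) ∘ₗ π)).mulVecLin =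
      LinearMap.range L' := by
  rw [Matrix.mulVecLin_add, Matrix.mulVecLin_one, ← Matrix.toLin'_apply',
    Matrix.toLin'_toMatrix', ← LinearMap.range_comp, LinearMap.add_comp, LinearMap.comp_assoc, h]
  simp

variable {K : Type*} [Field K] {Γ : Type*} [LinearOrderedCommGroupWithZero Γ]

/-- if `U, W ⊆ Kⁿ` have the same dimension `d` and `res U = res W`,
then some `M ∈ GLₙ(𝒪)` with `res M = Iₙ` (hence a risometry) maps `U` onto `W`. -/
theorem exists_risometry_matrix_mapping_subspace
    (v : Valuation K Γ) {n d : ℕ}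
    (U W : Submodule K (Fin n → K))
    (hU : Module.finrank K U = d) (hW : Module.finrank K W = d)
    (hres : resSet v (U : Set (Fin n → K)) = resSet v (W : Set (Fin n → K))) :
    ∃ M : Matrix (Fin n) (Fin n) K, MemGLO v M ∧ resM v M = 1 ∧
      (∀ x : Fin n → K, rvEq v (M.mulVec x) x) ∧
      U.map M.mulVecLin = W := by
  have hUW : resSubmodule v U = resSubmodule v W := SetLike.coe_injective hres
  have hd : d ≤ n := hU ▸ (Submodule.finrank_le U).trans_eq (Module.finrank_fin_fun K)
  obtain ⟨S, hScard, hS⟩ :=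
    exists_finset_card_eq_of_finrank_le (hU ▸ finrank_resSubmodule_le v U) hd
  obtain ⟨LU, rfl, hπU⟩ := exists_coordRestrict_comp_eq_id v hS (hScard.trans hU.symm)
  obtain ⟨LW, rfl, hπW⟩ := exists_coordRestrict_comp_eq_id v (hUW ▸ hS) (hScard.trans hW.symm)
  have hN := valuation_toMatrix'_lt_one v hUW hS hπU hπW
  exact ⟨1 + _, memGLO_one_add v hN, resM_one_add v hN, rvEq_one_add_mulVec v hN,
    map_range_mulVecLin_one_add_toMatrix' hπU⟩
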